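/- arXiv:1803.09008 — 2 statements merged into one kernel-verified Lean document; each statement's English description precedes it below -/
import Mathlib

section
/- Let n ≥ 1, let H be a subgroup of (ℤ/nℤ)*, and let G = (ℤ/nℤ) ⋊ H be the semidirect product in which u ∈ H acts on the additive group ℤ/nℤ by multiplication x ↦ u·x. Suppose H contains an element of order q, where q = p^e is a prime power (p prime, e ≥ 1). If there exists an injective group homomorphism from G into GL_d(ℂ), then d ≥ q. -/
/-- The action of the unit group `(ℤ/nℤ)ˣ` on the additive group `ℤ/nℤ`
(written multiplicatively) by multiplication `x ↦ u·x`. -/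
def unitsAut (n : ℕ) : (ZMod n)ˣ →* MulAut (Multiplicative (ZMod n)) where
  toFun u :=
    { toFun := fun x => Multiplicative.ofAdd ((u : ZMod n) * x.toAdd)
      invFun := fun x => Multiplicative.ofAdd (((u⁻¹ : (ZMod n)ˣ) : ZMod n) * x.toAdd)
      left_inv := fun x => by simp [← mul_assoc]
      right_inv := fun x => by simp [← mul_assoc]
      map_mul' := fun x y => by simp [mul_add] }
  map_one' := by ext x; simp
  map_mul' u v := by ext x; simp [mul_assoc]

/-!
The generator `1` of `ℤ/nℤ` is sent to a matrix `M` with `Mⁿ = 1`, which is therefore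
diagonalizable, and conjugating by the image of `h ∈ H` turns `M` into `Mᵃ`, where `a`
represents `h`; so `x ↦ xᵃ` permutes the spectrum of `M`. If `h` has order `q = pᵉ`, then
`M^(a^(q/p)) ≠ M` by injectivity, so by diagonalizability some eigenvalue `x` is moved by
`x ↦ x^(a^(q/p))`. Hence `a` has order exactly `q` modulo the order of `x`, and
`x, xᵃ, …, x^(a^(q-1))` are `q` distinct eigenvalues of a `d × d` matrix.
-/

open Polynomial

theorem spectrum.pow_pow_mem_of_eq_conj {K A : Type*} [Field K] [Ring A] [Algebra K A]
    {M : A} {a : ℕ} (u : Aˣ) (hM : M ^ a = u * M * ↑u⁻¹) {x : K} (hx : x ∈ spectrum K M)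
    (j : ℕ) : x ^ a ^ j ∈ spectrum K M := by
  induction j with
  | zero => simpa using hx
  | succ j ih =>
    rw [pow_succ, pow_mul, ← spectrum.units_conjugate (u := u), ← hM]
    exact spectrum.pow_image_subset M a ⟨_, ih, rfl⟩

section PowersModOrder

variable {G : Type*} [Monoid G] {x : G}

theorem IsOfFinOrder.pow_eq_pow_iff_natCast_eq (hx : IsOfFinOrder x) {b c : ℕ} :
    x ^ b = x ^ c ↔ (b : ZMod (orderOf x)) = c := by
  rw [hx.pow_eq_pow_iff_modEq, ZMod.natCast_eq_natCast_iff]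

theorem IsOfFinOrder.orderOf_natCast_eq_prime_pow (hx : IsOfFinOrder x) {a p e : ℕ}
    [Fact p.Prime] (hfin : x ^ a ^ p ^ (e + 1) = x) (hnot : x ^ a ^ p ^ e ≠ x) :
    orderOf (a : ZMod (orderOf x)) = p ^ (e + 1) := by
  nth_rw 2 [← pow_one x] at hfin hnot
  rw [Ne, hx.pow_eq_pow_iff_natCast_eq] at hnot
  rw [hx.pow_eq_pow_iff_natCast_eq] at hfin
  push_cast at hfin hnot
  exact orderOf_eq_prime_pow hnot hfin

theorem IsOfFinOrder.injective_pow_pow (hx : IsOfFinOrder x) (a : ℕ) :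
    Function.Injective fun i : Fin (orderOf (a : ZMod (orderOf x))) => x ^ a ^ (i : ℕ) := by
  intro i j hij
  have ha : IsOfFinOrder (a : ZMod (orderOf x)) := orderOf_pos_iff.1 (Nat.zero_lt_of_lt i.isLt)
  have hij : (a : ZMod (orderOf x)) ^ (i : ℕ) = (a : ZMod (orderOf x)) ^ (j : ℕ) := by
    simpa using hx.pow_eq_pow_iff_natCast_eq.1 hij
  rw [ha.pow_eq_pow_iff_modEq, Nat.ModEq, Nat.mod_eq_of_lt i.isLt, Nat.mod_eq_of_lt j.isLt] at hij
  exact Fin.ext hij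

end PowersModOrder

section SpectrumOfMatrix

variable {ι K : Type*} [Fintype ι] [DecidableEq ι] [Field K]

theorem Matrix.isRoot_minpoly_iff_mem_spectrum (A : Matrix ι ι K) (x : K) :
    (minpoly K A).IsRoot x ↔ x ∈ spectrum K A := by
  rw [← AlgEquiv.spectrum_eq (Matrix.toLinAlgEquiv (Pi.basisFun K ι)) A,
    ← Module.End.hasEigenvalue_iff_mem_spectrum, Module.End.hasEigenvalue_iff_isRoot,
    minpoly.algEquiv_eq]

theorem Matrix.ncard_spectrum_le (A : Matrix ι ι K) :
    (spectrum K A).ncard ≤ Fintype.card ι := by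
  classical
  have hspec : spectrum K A = ↑A.charpoly.roots.toFinset := by
    ext x
    simp [Matrix.mem_spectrum_iff_isRoot_charpoly, A.charpoly_monic.ne_zero]
  calc (spectrum K A).ncard = A.charpoly.roots.toFinset.card := by rw [hspec, Set.ncard_coe_finset]
    _ ≤ Multiset.card A.charpoly.roots := Multiset.toFinset_card_le _
    _ ≤ A.charpoly.natDegree := card_roots' _
    _ = Fintype.card ι := A.charpoly_natDegree_eq_dim

/-- A separable annihilating polynomial makes the matrix diagonalizable. -/
theorem Matrix.aeval_eq_zero_of_forall_mem_spectrum [IsAlgClosed K] {A : Matrix ι ι K}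
    {P : K[X]} (hP : P.Separable) (hPA : aeval A P = 0) {g : K[X]}
    (hg : ∀ x ∈ spectrum K A, g.IsRoot x) : aeval A g = 0 := by
  rcases eq_or_ne g 0 with rfl | hg0
  · exact map_zero _
  rw [← minpoly.dvd_iff,
    IsAlgClosed.dvd_iff_roots_le_roots (minpoly.ne_zero (IsIntegral.of_finite K A)) hg0,
    Multiset.le_iff_subset (nodup_roots (hP.of_dvd (minpoly.dvd K A hPA)))]
  intro x hx
  rw [mem_roots hg0]
  exact hg x ((A.isRoot_minpoly_iff_mem_spectrum x).1 (isRoot_of_mem_roots hx))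

theorem Matrix.orderOf_natCast_le_card_of_pow_pow_mem_spectrum {A : Matrix ι ι K} {x : K}
    (hx : IsOfFinOrder x) {a : ℕ} (hxa : ∀ j, x ^ a ^ j ∈ spectrum K A) :
    orderOf (a : ZMod (orderOf x)) ≤ Fintype.card ι := by
  calc orderOf (a : ZMod (orderOf x))
      = (Set.range fun i : Fin (orderOf (a : ZMod (orderOf x))) => x ^ a ^ (i : ℕ)).ncard := by
        rw [Set.ncard_range_of_injective (hx.injective_pow_pow a), Nat.card_eq_fintype_card,
          Fintype.card_fin]
    _ ≤ (spectrum K A).ncard :=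
        Set.ncard_le_ncard (Set.range_subset_iff.2 fun i => hxa i) (Matrix.finite_spectrum A)
    _ ≤ Fintype.card ι := A.ncard_spectrum_le

theorem Matrix.GeneralLinearGroup.prime_pow_le_card_of_pow_eq_conj [IsAlgClosed K]
    {A u : GL ι K} {n a p e : ℕ} [Fact p.Prime]
    (hn : (n : K) ≠ 0) (hAn : A ^ n = 1) (hconj : A ^ a = u * A * u⁻¹)
    (hfix : a ^ p ^ (e + 1) ≡ 1 [MOD n]) (hne : A ^ a ^ p ^ e ≠ A) :
    p ^ (e + 1) ≤ Fintype.card ι := by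
  have hsep : (X ^ n - C 1 : K[X]).Separable := separable_X_pow_sub_C 1 hn one_ne_zero
  have hAn' : aeval (A : Matrix ι ι K) (X ^ n - C 1 : K[X]) = 0 := by
    simp [← Units.val_pow_eq_pow_val, hAn]
  obtain ⟨x, hx, hxne⟩ : ∃ x ∈ spectrum K (A : Matrix ι ι K), x ^ a ^ p ^ e ≠ x := by
    by_contra! hall
    have := Matrix.aeval_eq_zero_of_forall_mem_spectrum hsep hAn' (g := X ^ a ^ p ^ e - X)
      fun x hx => by simp [hall x hx]
    rw [map_sub, map_pow, aeval_X, sub_eq_zero, ← Units.val_pow_eq_pow_val] at this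
    exact hne (Units.ext this)
  have hxn : x ^ n = 1 := by
    have := ((Matrix.isRoot_minpoly_iff_mem_spectrum _ x).2 hx).dvd (minpoly.dvd K _ hAn')
    simpa [sub_eq_zero] using this
  have hxfin : IsOfFinOrder x :=
    isOfFinOrder_iff_pow_eq_one.2 ⟨n, Nat.pos_of_ne_zero (by rintro rfl; simp at hn), hxn⟩
  have hxfix : x ^ a ^ p ^ (e + 1) = x := by
    rw [pow_eq_pow_mod _ hxn, hfix, ← pow_eq_pow_mod _ hxn, pow_one]
  rw [← hxfin.orderOf_natCast_eq_prime_pow hxfix hxne]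
  have hconj' : (A : Matrix ι ι K) ^ a = u * A * (u⁻¹ : GL ι K) := by
    rw [← Units.val_pow_eq_pow_val, hconj, Units.val_mul, Units.val_mul]
  exact Matrix.orderOf_natCast_le_card_of_pow_pow_mem_spectrum hxfin
    (spectrum.pow_pow_mem_of_eq_conj u hconj' hx)

end SpectrumOfMatrix

theorem SemidirectProduct.inl_ofAdd_one_pow {n : ℕ} {G : Type*} [Group G]
    {φ : G →* MulAut (Multiplicative (ZMod n))} (m : ℕ) :
    (inl (Multiplicative.ofAdd 1) : Multiplicative (ZMod n) ⋊[φ] G) ^ m =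
      inl (Multiplicative.ofAdd (m : ZMod n)) := by
  rw [← map_pow, ← ofAdd_nsmul, nsmul_one]

theorem SemidirectProduct.inl_ofAdd_one_pow_val_eq_conj {n : ℕ} [NeZero n]
    {H : Subgroup (ZMod n)ˣ} (h : H) :
    (inl (Multiplicative.ofAdd 1) : Multiplicative (ZMod n) ⋊[(unitsAut n).comp H.subtype] H) ^
        ((h : (ZMod n)ˣ) : ZMod n).val =
      inr h * inl (Multiplicative.ofAdd 1) * (inr h)⁻¹ := by
  rw [inl_ofAdd_one_pow, ← map_inv, ← inl_aut, ZMod.natCast_zmod_val]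
  simp [unitsAut]

theorem stmt5_general (n : ℕ) (hn : 1 ≤ n) (H : Subgroup (ZMod n)ˣ)
    (p e : ℕ) (hp : p.Prime) (he : 1 ≤ e) (q : ℕ) (hq : q = p ^ e)
    (hord : ∃ h : H, orderOf h = q)
    (d : ℕ)
    (f : (Multiplicative (ZMod n)) ⋊[(unitsAut n).comp H.subtype] H →*
      Matrix.GeneralLinearGroup (Fin d) ℂ)
    (hf : Function.Injective f) :
    q ≤ d := by
  subst hq
  obtain ⟨e, rfl⟩ := Nat.exists_eq_add_of_le' he
  have : Fact p.Prime := ⟨hp⟩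
  have : NeZero n := ⟨by omega⟩
  obtain ⟨h, hh⟩ := hord
  set a := ((h : (ZMod n)ˣ) : ZMod n).val
  have ha_pow (k : ℕ) : ((a ^ k : ℕ) : ZMod n) = ((h ^ k : H) : (ZMod n)ˣ) := by simp [a]
  set g : Multiplicative (ZMod n) ⋊[(unitsAut n).comp H.subtype] H :=
    SemidirectProduct.inl (Multiplicative.ofAdd 1)
  have hfix : a ^ p ^ (e + 1) ≡ 1 [MOD n] := by
    rw [← ZMod.natCast_eq_natCast_iff, ha_pow, ← hh, pow_orderOf_eq_one]
    simp
  have hne : g ^ a ^ p ^ e ≠ g := by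
    rw [SemidirectProduct.inl_ofAdd_one_pow, Ne, SemidirectProduct.inl_injective.eq_iff,
      Multiplicative.ofAdd.injective.eq_iff, ha_pow, Units.val_eq_one, OneMemClass.coe_eq_one]
    refine pow_ne_one_of_lt_orderOf (pow_ne_zero e hp.ne_zero) ?_
    rw [hh]
    exact Nat.pow_lt_pow_right hp.one_lt e.lt_succ_self
  have hfg_pow : f g ^ n = 1 := by
    rw [← map_pow, SemidirectProduct.inl_ofAdd_one_pow]
    simp
  have hfg_conj : f g ^ a = f (.inr h) * f g * (f (.inr h))⁻¹ := by
    rw [← map_pow, SemidirectProduct.inl_ofAdd_one_pow_val_eq_conj, map_mul, map_mul, map_inv]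
  have hfg_ne : f g ^ a ^ p ^ e ≠ f g := by
    rw [← map_pow]
    exact hf.ne hne
  simpa only [Fintype.card_fin] using Matrix.GeneralLinearGroup.prime_pow_le_card_of_pow_eq_conj
    (Nat.cast_ne_zero.2 (NeZero.ne n)) hfg_pow hfg_conj hfix hfg_ne

/-- Let `H ≤ (ℤ/nℤ)ˣ` and `G = (ℤ/nℤ) ⋊ H`. If `H` contains an
element of prime power order `q = pᵉ` and `G` embeds into `GL_d(ℂ)`, then `d ≥ q`. -/
theorem stmt5 (n : ℕ) (hn : 1 ≤ n) (H : Subgroup (ZMod n)ˣ)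
    (p e : ℕ) (hp : p.Prime) (he : 1 ≤ e) (q : ℕ) (hq : q = p ^ e)
    (hord : ∃ h : H, orderOf h = q)
    (d : ℕ) (hd : 0 < d)
    (f : (Multiplicative (ZMod n)) ⋊[(unitsAut n).comp H.subtype] H →*
      Matrix.GeneralLinearGroup (Fin d) ℂ)
    (hf : Function.Injective f) :
    q ≤ d :=
  stmt5_general n hn H p e hp he q hq hord d f hf
end

section
/- For each integer n ≥ 1, let H_n be a subgroup of (ℤ/nℤ)* and let G_n = (ℤ/nℤ) ⋊ H_n be the semidirect product in which u ∈ H_n acts on the additive group ℤ/nℤ by multiplication x ↦ u·x. If |H_n| → ∞ as n → ∞, then for every positive integer d, the set of integers n ≥ 1 such that G_n admits an injective group homomorphism into GL_d(ℂ) is finite. Equivalently, the minimal dimension of a faithful complex representation of G_n tends to infinity as n → ∞. -/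
/-!
Let `M = ρ(1)` be the image of the translation by `1 ∈ ℤ/nℤ`. Since `M ^ n = 1`, its minimal
polynomial divides the separable `X ^ n - 1`, so `M` is diagonalisable and any polynomial
vanishing on its spectrum (at most `d` eigenvalues) kills `M`. Conjugation by `ρ(u)` sends `M`
to `M ^ u`, so `μ ↦ μ ^ u` maps the spectrum into itself, and this self-map determines `M ^ u`,
hence `u`. Thus `|H_n| ≤ d ^ d`, and `|H_n| → ∞` leaves only finitely many `n`.
-/

open Polynomial

section Spectrum

variable {K A : Type*} [Field K] [Ring A] [Algebra K A]

theorem spectrum.pow_mem_of_isConj_pow {a : A} {k : ℕ} (h : IsConj a (a ^ k)) {μ : K}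
    (hμ : μ ∈ spectrum K a) : μ ^ k ∈ spectrum K a := by
  obtain ⟨u, hu⟩ := h
  have hconj : a ^ k = u * a * u⁻¹ := by rw [hu.eq, Units.mul_inv_cancel_right]
  simpa [hconj] using spectrum.pow_mem_pow a k hμ

theorem minpoly_separable_of_pow_eq_one {a : A} {n : ℕ} (hn : (n : K) ≠ 0) (h : a ^ n = 1) :
    (minpoly K a).Separable := by
  have hsep : (X ^ n - C 1 : K[X]).Separable := separable_X_pow_sub_C 1 hn one_ne_zero
  exact hsep.of_dvd (minpoly.dvd K a (by simp [h]))

end Spectrum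

namespace Matrix

variable {n K : Type*} [Fintype n] [DecidableEq n] [Field K]

theorem card_spectrum_le (A : Matrix n n K) : Nat.card (spectrum K A) ≤ Fintype.card n := by
  classical
  have hspec : spectrum K A = ↑A.charpoly.roots.toFinset := by
    ext μ
    simp [mem_spectrum_iff_isRoot_charpoly, A.charpoly_monic.ne_zero]
  rw [hspec, Nat.card_coe_set_eq, Set.ncard_coe_finset, ← A.charpoly_natDegree_eq_dim]
  exact (Multiset.toFinset_card_le _).trans (card_roots' _)

variable [IsAlgClosed K]

theorem aeval_eq_zero_of_forall_mem_spectrum_s6 {A : Matrix n n K} (hA : (minpoly K A).Separable)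
    {q : K[X]} (hq : ∀ μ ∈ spectrum K A, q.IsRoot μ) : aeval A q = 0 := by
  rcases eq_or_ne q 0 with rfl | hq0
  · simp
  have hroots : (minpoly K A).roots ≤ q.roots := by
    refine (Multiset.le_iff_subset (nodup_roots hA)).2 fun μ hμ => (mem_roots hq0).2 (hq μ ?_)
    exact mem_spectrum_iff_isRoot_charpoly.2 ((isRoot_of_mem_roots hμ).dvd A.minpoly_dvd_charpoly)
  obtain ⟨r, rfl⟩ := (IsAlgClosed.splits _).dvd_of_roots_le_roots
    (minpoly.ne_zero (Algebra.IsIntegral.isIntegral A)) hroots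
  rw [map_mul, minpoly.aeval, zero_mul]

theorem card_le_of_isConj_pow {ι : Type*} {A : Matrix n n K} (hA : (minpoly K A).Separable)
    (k : ι → ℕ) (hconj : ∀ i, IsConj A (A ^ k i)) (hk : Function.Injective fun i => A ^ k i) :
    Nat.card ι ≤ Fintype.card n ^ Fintype.card n := by
  let e : ι → spectrum K A → spectrum K A := fun i μ =>
    ⟨μ ^ k i, spectrum.pow_mem_of_isConj_pow (hconj i) μ.2⟩
  have he : Function.Injective e := by
    intro i j hij
    have hpow : ∀ μ ∈ spectrum K A, (X ^ k i - X ^ k j : K[X]).IsRoot μ := fun μ hμ => by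
      simpa [sub_eq_zero, e] using congrArg Subtype.val (congrFun hij ⟨μ, hμ⟩)
    exact hk (sub_eq_zero.1 (by simpa using aeval_eq_zero_of_forall_mem_spectrum_s6 hA hpow))
  calc Nat.card ι ≤ Nat.card (spectrum K A → spectrum K A) := Nat.card_le_card_of_injective e he
    _ = Nat.card (spectrum K A) ^ Nat.card (spectrum K A) := Nat.card_fun
    _ ≤ Fintype.card n ^ Fintype.card n := Nat.pow_self_mono A.card_spectrum_le

end Matrix

abbrev ZModSemidirect (n : ℕ) (H : Subgroup (ZMod n)ˣ) : Type :=
  Multiplicative (ZMod n) ⋊[(unitsAut n).comp H.subtype] H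

theorem unitsAut_apply {n : ℕ} (u : (ZMod n)ˣ) (x : Multiplicative (ZMod n)) :
    unitsAut n u x = Multiplicative.ofAdd ((u : ZMod n) * x.toAdd) :=
  rfl

namespace ZModSemidirect

open SemidirectProduct

variable {n : ℕ} (H : Subgroup (ZMod n)ˣ)

def translation : ZModSemidirect n H := inl (Multiplicative.ofAdd 1)

theorem translation_pow (m : ℕ) :
    translation H ^ m = inl (Multiplicative.ofAdd (m : ZMod n)) := by
  rw [translation, ← map_pow, ← ofAdd_nsmul, nsmul_one]

theorem translation_pow_self : translation H ^ n = 1 := by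
  simp [translation_pow]

variable [NeZero n]

theorem translation_pow_val (x : ZMod n) :
    translation H ^ x.val = inl (Multiplicative.ofAdd x) := by
  rw [translation_pow, ZMod.natCast_zmod_val]

theorem isConj_translation_pow_val (u : H) :
    IsConj (translation H) (translation H ^ ((u : (ZMod n)ˣ) : ZMod n).val) := by
  refine isConj_iff.2 ⟨inr u, ?_⟩
  rw [translation_pow_val, translation, ← map_inv, ← inl_aut]
  simp [unitsAut_apply]

theorem injective_translation_pow_val :
    Function.Injective fun u : H => translation H ^ ((u : (ZMod n)ˣ) : ZMod n).val := by
  intro u v huv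
  simp only [translation_pow_val] at huv
  exact Subtype.ext (Units.ext (Multiplicative.ofAdd.injective (inl_injective huv)))

end ZModSemidirect

theorem card_le_pow_self_of_injective {n d : ℕ} [NeZero n] {H : Subgroup (ZMod n)ˣ}
    (ρ : ZModSemidirect n H →* Matrix.GeneralLinearGroup (Fin d) ℂ) (hρ : Function.Injective ρ) :
    Nat.card H ≤ d ^ d := by
  let ρ' : ZModSemidirect n H →* Matrix (Fin d) (Fin d) ℂ := (Units.coeHom _).comp ρ
  have hρ' : Function.Injective ρ' := Units.val_injective.comp hρ
  have hsep : (minpoly ℂ (ρ' (ZModSemidirect.translation H))).Separable :=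
    minpoly_separable_of_pow_eq_one (NeZero.natCast_ne n ℂ)
      (by rw [← map_pow, ZModSemidirect.translation_pow_self, map_one])
  simpa using Matrix.card_le_of_isConj_pow hsep (fun u : H => ((u : (ZMod n)ˣ) : ZMod n).val)
    (fun u => by simpa using ρ'.map_isConj (ZModSemidirect.isConj_translation_pow_val H u))
    (by simpa only [Function.comp_def, map_pow] using
      hρ'.comp (ZModSemidirect.injective_translation_pow_val H))

theorem stmt6_general (H : ∀ n : ℕ, Subgroup (ZMod n)ˣ)
    (hH : Filter.Tendsto (fun n => Nat.card (H n)) Filter.atTop Filter.atTop)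
    (d : ℕ) :
    {n : ℕ | 1 ≤ n ∧ ∃ f : (Multiplicative (ZMod n)) ⋊[(unitsAut n).comp (H n).subtype] (H n) →*
        Matrix.GeneralLinearGroup (Fin d) ℂ, Function.Injective f}.Finite := by
  have hsmall : {n | ¬d ^ d < Nat.card (H n)}.Finite :=
    Filter.eventually_cofinite.1 (Nat.cofinite_eq_atTop ▸ hH.eventually_gt_atTop (d ^ d))
  refine hsmall.subset ?_
  rintro n ⟨hn, ρ, hρ⟩
  have : NeZero n := ⟨by omega⟩
  exact not_lt.2 (card_le_pow_self_of_injective ρ hρ)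

/-- For each `n` let `H n ≤ (ℤ/nℤ)ˣ` and `G_n = (ℤ/nℤ) ⋊ H_n`.
If `|H n| → ∞` as `n → ∞` then for every `d > 0` only finitely many of the
groups `G_n` (with `n ≥ 1`) embed into `GL_d(ℂ)`; i.e. the representation
dimension of `G_n` tends to infinity. -/
theorem stmt6 (H : ∀ n : ℕ, Subgroup (ZMod n)ˣ)
    (hH : Filter.Tendsto (fun n => Nat.card (H n)) Filter.atTop Filter.atTop)
    (d : ℕ) (hd : 0 < d) :
    {n : ℕ | 1 ≤ n ∧ ∃ f : (Multiplicative (ZMod n)) ⋊[(unitsAut n).comp (H n).subtype] (H n) →*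
        Matrix.GeneralLinearGroup (Fin d) ℂ, Function.Injective f}.Finite :=
  stmt6_general H hH d
end
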